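/- Let T be a tree that is not a single vertex, and let S ⊆ V(T) consist of at least two vertices. Construct a graph 𝒯(T) as follows: take three disjoint copies T₁, T₂, T₃ of T, and for each vertex v ∈ S, connect its three copies v₁ ∈ T₁, v₂ ∈ T₂, v₃ ∈ T₃ pairwise by edges so that they form a 3-cycle. Then gon(𝒯(T)) = 3. -/

import Mathlib

/-! Upper bound: the projection `𝒯(T) → T` pulls the divisor of a vertex back to a divisor of
degree 3 with one chip in each sheet. In a tree any two vertices are linearly equivalent (every
edge is a bridge, and the indicator of one side of a bridge moves a chip across it), and this
equivalence lifts sheetwise, so the pulled-back divisor has rank at least 1.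

Lower bound: let `D` be effective of degree at most 2 and rank at least 1, and write
`D - E = Δf` with `E` effective and containing a vertex of `S` in a chosen sheet. Pairing
`D - E` with the indicator of a level set `{f ≥ k}` shows that at most `deg D ≤ 2` edges cross
any level, whereas if `f` is not constant on some triangle, three edges cross the level of its
larger value. So `f` is constant on the triangles, `Δf` sums to zero on each sheet, and `D` has degree at least
1 on each of the three sheets. -/

/-- A finite loopless multigraph: a finite vertex type, a finite edge type,
and an assignment of an unordered pair of distinct endpoints to each edge. -/
structure Multigraph where
  V : Type
  E : Type
  [fintypeV : Fintype V]
  [fintypeE : Fintype E]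
  [decEqV : DecidableEq V]
  ends : E → Sym2 V
  loopless : ∀ e, ¬ (ends e).IsDiag

attribute [instance] Multigraph.fintypeV Multigraph.fintypeE Multigraph.decEqV

namespace Multigraph

/-- The graph obtained by deleting the edges in `W` is connected (finite graphs are
connected iff the vertex set is nonempty and every nonempty proper vertex subset
has an edge leaving it). -/
def ConnectedWithout (G : Multigraph) (W : Set G.E) : Prop :=
  Nonempty G.V ∧
    ∀ A : Finset G.V, A.Nonempty → A ≠ Finset.univ →
      ∃ e, e ∉ W ∧ ∃ u v, G.ends e = s(u, v) ∧ u ∈ A ∧ v ∉ A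

/-- `G` is connected. -/
def Connected (G : Multigraph) : Prop := G.ConnectedWithout ∅

/-- `G` is `k`-edge-connected: deleting any set of at most `k - 1` edges
leaves a connected graph. -/
def EdgeConnected (G : Multigraph) (k : ℕ) : Prop :=
  ∀ W : Finset G.E, W.card < k → G.ConnectedWithout ↑W

/-- An edge is a bridge if deleting it disconnects the graph. -/
def IsBridge (G : Multigraph) (e : G.E) : Prop := ¬ G.ConnectedWithout {e}

/-- The graph obtained by deleting the vertices in `U` (and all incident edges)
is connected. -/
def ConnectedAvoiding (G : Multigraph) (U : Set G.V) : Prop :=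
  (∃ v, v ∉ U) ∧
    ∀ A : Finset G.V, A.Nonempty → (∀ a ∈ A, a ∉ U) → (∃ w, w ∉ U ∧ w ∉ A) →
      ∃ e u v, G.ends e = s(u, v) ∧ u ∈ A ∧ v ∉ A ∧ v ∉ U

/-- `G` is `k`-vertex-connected: deleting any set of at most `k - 1` vertices
leaves a connected graph. -/
def VertexConnected (G : Multigraph) (k : ℕ) : Prop :=
  ∀ U : Finset G.V, U.card < k → G.ConnectedAvoiding ↑U

/-- `G` is simple: no two distinct edges have the same pair of endpoints. -/
def Simple (G : Multigraph) : Prop :=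
  ∀ e e' : G.E, G.ends e = G.ends e' → e = e'

/-- The genus `g(G) = |E| - |V| + 1`. -/
def genus (G : Multigraph) : ℤ :=
  (Fintype.card G.E : ℤ) - (Fintype.card G.V : ℤ) + 1

/-- A tree is a connected graph of genus 0. -/
def IsTree (G : Multigraph) : Prop := G.Connected ∧ G.genus = 0

/-- The number of edges joining `u` and `v`. -/
noncomputable def numEdges (G : Multigraph) (u v : G.V) : ℕ :=
  Set.ncard {e : G.E | G.ends e = s(u, v)}

/-- The valence of a vertex: the number of incident edges. -/
noncomputable def valence (G : Multigraph) (v : G.V) : ℕ :=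
  Set.ncard {e : G.E | v ∈ G.ends e}

/-- A divisor on `G`: an element of the free abelian group on `V(G)`. -/
abbrev Divisor (G : Multigraph) : Type := G.V → ℤ

/-- The degree of a divisor: the sum of its coefficients. -/
def degree (G : Multigraph) (D : G.Divisor) : ℤ := ∑ v, D v

/-- A divisor is effective if all its coefficients are nonnegative. -/
def Effective (G : Multigraph) (D : G.Divisor) : Prop := ∀ v, 0 ≤ D v

/-- The Laplacian of `G` applied to an integer vector `f`. -/
noncomputable def laplacian (G : Multigraph) (f : G.V → ℤ) : G.Divisor :=
  fun v => ∑ w, (G.numEdges v w : ℤ) * (f v - f w)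

/-- Linear equivalence of divisors: the difference is in the image of the Laplacian. -/
def LinEquiv (G : Multigraph) (D D' : G.Divisor) : Prop :=
  ∃ f : G.V → ℤ, D - D' = G.laplacian f

/-- `D - F` is equivalent to an effective divisor for every effective `F` of degree `k`. -/
def RankGe (G : Multigraph) (D : G.Divisor) (k : ℤ) : Prop :=
  ∀ F : G.Divisor, G.Effective F → G.degree F = k →
    ∃ E' : G.Divisor, G.Effective E' ∧ G.LinEquiv (D - F) E'

/-- The Baker–Norine rank of a divisor. -/
noncomputable def rank (G : Multigraph) (D : G.Divisor) : ℤ :=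
  sSup {r : ℤ | r = -1 ∨ (0 ≤ r ∧ G.RankGe D r)}

/-- The (divisorial) gonality of `G`: the minimum degree of an effective divisor
of rank at least 1. -/
noncomputable def gonality (G : Multigraph) : ℕ :=
  sInf {n : ℕ | ∃ D : G.Divisor, G.Effective D ∧ G.degree D = (n : ℤ) ∧ 1 ≤ G.rank D}

end Multigraph

/-- A morphism of multigraphs: vertices map to vertices, and each edge maps either
to an edge joining the images of its endpoints (if they are distinct) or to the
common image of its endpoints. -/
structure Morphism (G G' : Multigraph) where
  vertexMap : G.V → G'.V
  edgeMap : G.E → G'.E ⊕ G'.V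
  map_edge_of_eq : ∀ e u v, G.ends e = s(u, v) → vertexMap u = vertexMap v →
    edgeMap e = Sum.inr (vertexMap u)
  map_edge_of_ne : ∀ e u v, G.ends e = s(u, v) → vertexMap u ≠ vertexMap v →
    ∃ e', edgeMap e = Sum.inl e' ∧ G'.ends e' = s(vertexMap u, vertexMap v)

namespace Morphism

variable {G G' : Multigraph}

/-- The multiplicity `m_φ(v)` of `φ` at `v` with respect to an edge `e'` of `G'`. -/
noncomputable def mult (φ : Morphism G G') (v : G.V) (e' : G'.E) : ℕ :=
  Set.ncard {e : G.E | v ∈ G.ends e ∧ φ.edgeMap e = Sum.inl e'}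

/-- `φ` is harmonic if `m_φ(v)` does not depend on the chosen edge `e'`
incident to `φ(v)`. -/
def Harmonic (φ : Morphism G G') : Prop :=
  ∀ (v : G.V) (e₁ e₂ : G'.E),
    φ.vertexMap v ∈ G'.ends e₁ → φ.vertexMap v ∈ G'.ends e₂ →
      φ.mult v e₁ = φ.mult v e₂

/-- `φ` is non-degenerate if `m_φ(v) > 0` for every vertex `v`. -/
def Nondegenerate (φ : Morphism G G') : Prop :=
  ∀ (v : G.V) (e' : G'.E), φ.vertexMap v ∈ G'.ends e' → 0 < φ.mult v e'

/-- `φ` has degree `d`: every edge of `G'` has exactly `d` preimages. -/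
def HasDegree (φ : Morphism G G') (d : ℕ) : Prop :=
  Nonempty G'.E ∧ ∀ e' : G'.E, Set.ncard {e : G.E | φ.edgeMap e = Sum.inl e'} = d

end Morphism

/-- The graph `𝒯(T)`: three disjoint copies of `T`, where for each `v ∈ S` the three
copies of `v` are joined pairwise into a 3-cycle. -/
noncomputable def tripled (T : Multigraph) (S : Finset T.V) : Multigraph where
  V := Fin 3 × T.V
  E := (Fin 3 × T.E) ⊕ ({v // v ∈ S} × Fin 3)
  ends := fun e =>
    match e with
    | Sum.inl (i, e) => Sym2.map (fun v => (i, v)) (T.ends e)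
    | Sum.inr (v, i) => s((i, v.1), (i + 1, v.1))
  loopless := by
    rintro (⟨i, e⟩ | ⟨v, i⟩) h
    all_goals dsimp only at h
    · have hT := T.loopless e
      generalize hq : T.ends e = q at h hT
      induction q using Sym2.ind with
      | _ x y =>
        rw [Sym2.map_pair_eq, Sym2.mk_isDiag_iff] at h
        exact hT (Sym2.mk_isDiag_iff.mpr (congrArg Prod.snd h))
    · rw [Sym2.mk_isDiag_iff] at h
      have hi : i = i + 1 := congrArg Prod.fst h
      exact absurd (left_eq_add.mp hi) (by decide)


namespace Multigraph

variable (G : Multigraph)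

lemma numEdges_comm (u v : G.V) : G.numEdges u v = G.numEdges v u := by
  rw [numEdges, numEdges, Sym2.eq_swap]

lemma laplacian_add (f g : G.V → ℤ) :
    G.laplacian (f + g) = G.laplacian f + G.laplacian g := by
  ext v
  simp only [laplacian, Pi.add_apply, ← Finset.sum_add_distrib]
  exact Finset.sum_congr rfl fun w _ => by ring

lemma laplacian_neg (f : G.V → ℤ) : G.laplacian (-f) = -G.laplacian f := by
  ext v
  simp only [laplacian, Pi.neg_apply, ← Finset.sum_neg_distrib]
  exact Finset.sum_congr rfl fun w _ => by ring

lemma laplacian_zero : G.laplacian 0 = 0 := by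
  ext v
  simp [laplacian]

lemma sum_laplacian (f : G.V → ℤ) : ∑ v, G.laplacian f v = 0 := by
  have hswap : ∑ v, ∑ w, (G.numEdges v w : ℤ) * f w = ∑ v, ∑ w, (G.numEdges v w : ℤ) * f v := by
    rw [Finset.sum_comm]
    simp only [numEdges_comm G _ _]
  simp only [laplacian, mul_sub, Finset.sum_sub_distrib, hswap, sub_self]

lemma degree_add (D D' : G.Divisor) : G.degree (D + D') = G.degree D + G.degree D' :=
  Finset.sum_add_distrib

lemma degree_sub (D D' : G.Divisor) : G.degree (D - D') = G.degree D - G.degree D' :=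
  Finset.sum_sub_distrib ..

lemma degree_single (v : G.V) (c : ℤ) : G.degree (Pi.single v c) = c := by
  simp [degree]

lemma effective_single (v : G.V) {c : ℤ} (hc : 0 ≤ c) : G.Effective (Pi.single v c) := fun w => by
  rcases eq_or_ne w v with rfl | hw <;> simp [*]

variable {G}

lemma Effective.add {D D' : G.Divisor} (hD : G.Effective D) (hD' : G.Effective D') :
    G.Effective (D + D') := fun v => add_nonneg (hD v) (hD' v)

lemma Effective.degree_nonneg {D : G.Divisor} (hD : G.Effective D) : 0 ≤ G.degree D :=
  Finset.sum_nonneg fun v _ => hD v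

lemma LinEquiv.refl (D : G.Divisor) : G.LinEquiv D D :=
  ⟨0, by rw [sub_self, laplacian_zero]⟩

lemma LinEquiv.symm {D D' : G.Divisor} (h : G.LinEquiv D D') : G.LinEquiv D' D := by
  obtain ⟨f, hf⟩ := h
  exact ⟨-f, by rw [laplacian_neg, ← hf, neg_sub]⟩

lemma LinEquiv.trans {D D' D'' : G.Divisor} (h : G.LinEquiv D D') (h' : G.LinEquiv D' D'') :
    G.LinEquiv D D'' := by
  obtain ⟨f, hf⟩ := h
  obtain ⟨f', hf'⟩ := h'
  exact ⟨f + f', by rw [laplacian_add, ← hf, ← hf', sub_add_sub_cancel]⟩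

lemma LinEquiv.degree_eq {D D' : G.Divisor} (h : G.LinEquiv D D') :
    G.degree D = G.degree D' := by
  obtain ⟨f, hf⟩ := h
  have h0 : G.degree (D - D') = 0 := by rw [hf]; exact G.sum_laplacian f
  rw [degree_sub] at h0
  omega

lemma RankGe.le_degree [Nonempty G.V] {D : G.Divisor} {r : ℤ} (hr0 : 0 ≤ r)
    (h : G.RankGe D r) : r ≤ G.degree D := by
  obtain ⟨v⟩ := ‹Nonempty G.V›
  obtain ⟨E, hE, hDE⟩ := h (Pi.single v r) (G.effective_single v hr0) (G.degree_single v r)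
  have := hDE.degree_eq
  rw [degree_sub, degree_single] at this
  linarith [hE.degree_nonneg]

lemma RankGe.mono [Nonempty G.V] {D : G.Divisor} {r s : ℤ} (hsr : s ≤ r)
    (h : G.RankGe D r) : G.RankGe D s := by
  obtain ⟨v⟩ := ‹Nonempty G.V›
  intro F hF hFdeg
  have hc : G.Effective (Pi.single v (r - s)) := G.effective_single v (by omega)
  obtain ⟨E, hE, f, hf⟩ := h (F + Pi.single v (r - s)) (hF.add hc)
    (by rw [degree_add, hFdeg, degree_single]; ring)
  refine ⟨E + Pi.single v (r - s), hE.add hc, f, ?_⟩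
  rw [← hf]
  abel

lemma one_le_rank_iff [Nonempty G.V] (D : G.Divisor) : 1 ≤ G.rank D ↔ G.RankGe D 1 := by
  have hbdd : BddAbove {r : ℤ | r = -1 ∨ (0 ≤ r ∧ G.RankGe D r)} :=
    ⟨max (G.degree D) (-1), by
      rintro r (rfl | ⟨hr0, hr⟩)
      · exact le_max_right _ _
      · exact (hr.le_degree hr0).trans (le_max_left _ _)⟩
  refine ⟨fun h => ?_, fun h => le_csSup hbdd (Or.inr ⟨zero_le_one, h⟩)⟩
  rcases Int.csSup_mem ⟨-1, Or.inl rfl⟩ hbdd with hr | ⟨-, hr⟩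
  · exact absurd h (by rw [rank, hr]; norm_num)
  · exact hr.mono h

lemma eq_single_of_effective_of_degree_eq_one {F : G.Divisor} (hF : G.Effective F)
    (h1 : G.degree F = 1) : ∃ v, F = Pi.single v 1 := by
  obtain ⟨v, hv⟩ : ∃ v, F v ≠ 0 := by
    by_contra! h0
    simp [degree, h0] at h1
  have hsplit := Finset.add_sum_erase Finset.univ F (Finset.mem_univ v)
  have hrest : ∑ w ∈ Finset.univ.erase v, F w = 0 := by
    have := Finset.sum_nonneg fun w (_ : w ∈ Finset.univ.erase v) => hF w
    have := (hF v).lt_of_ne' hv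
    rw [degree] at h1
    omega
  refine ⟨v, funext fun w => ?_⟩
  rcases eq_or_ne w v with rfl | hw
  · rw [degree] at h1
    simp only [Pi.single_eq_same]
    omega
  · rw [Pi.single_eq_of_ne hw]
    exact (Finset.sum_eq_zero_iff_of_nonneg fun w _ => hF w).mp hrest w
      (Finset.mem_erase.mpr ⟨hw, Finset.mem_univ w⟩)

variable (G) in
noncomputable def edgeEnergy (f g : G.V → ℤ) (e : G.E) : ℤ :=
  Sym2.lift ⟨fun a b => (f a - f b) * (g a - g b), fun _ _ => by ring⟩ (G.ends e)

lemma exists_ends_eq (e : G.E) : ∃ a b, G.ends e = s(a, b) ∧ a ≠ b := by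
  induction h : G.ends e using Sym2.ind with
  | _ a b => exact ⟨a, b, rfl, fun hab => G.loopless e (by rw [h, hab]; rfl)⟩

lemma sum_ite_ends_eq {e : G.E} {a b : G.V} (hab : G.ends e = s(a, b)) (hne : a ≠ b)
    (F : G.V → G.V → ℤ) :
    ∑ v, ∑ w, (if G.ends e = s(v, w) then F v w else 0) = F a b + F b a := by
  rw [Fintype.sum_eq_add a b hne fun v hv => Finset.sum_eq_zero fun w _ => if_neg ?_]
  · simp [hab, hne, hne.symm]
  · simp [hab, Ne.symm hv.1, Ne.symm hv.2]

lemma edgeEnergy_of_ends_eq {f g : G.V → ℤ} {e : G.E} {a b : G.V} (hab : G.ends e = s(a, b)) :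
    G.edgeEnergy f g e = (f a - f b) * (g a - g b) := by
  rw [edgeEnergy, hab, Sym2.lift_mk]

theorem sum_mul_laplacian (f g : G.V → ℤ) :
    ∑ v, g v * G.laplacian f v = ∑ e, G.edgeEnergy f g e := by
  have hnum : ∀ v w, (G.numEdges v w : ℤ) = ∑ e, if G.ends e = s(v, w) then 1 else 0 := by
    intro v w
    rw [numEdges, Set.ncard_eq_toFinset_card', Finset.sum_boole]
    simp
  calc ∑ v, g v * G.laplacian f v
      = ∑ e, ∑ v, ∑ w, if G.ends e = s(v, w) then g v * (f v - f w) else 0 := by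
        simp only [laplacian, hnum, Finset.mul_sum, Finset.sum_mul, ite_mul, one_mul, zero_mul,
          mul_ite, mul_zero]
        exact (Finset.sum_congr rfl fun v _ => Finset.sum_comm).trans Finset.sum_comm
    _ = ∑ e, G.edgeEnergy f g e := by
        refine Finset.sum_congr rfl fun e _ => ?_
        obtain ⟨a, b, hab, hne⟩ := G.exists_ends_eq e
        rw [sum_ite_ends_eq hab hne, edgeEnergy_of_ends_eq hab]
        ring

variable (G) in
def Crosses (f : G.V → ℤ) (k : ℤ) (e : G.E) : Prop :=
  ∃ a b, G.ends e = s(a, b) ∧ k ≤ f a ∧ f b < k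

lemma crosses_of_ends_eq {f : G.V → ℤ} {k : ℤ} {e : G.E} {a b : G.V} (hab : G.ends e = s(a, b))
    (h : ¬ (k ≤ f a ↔ k ≤ f b)) : G.Crosses f k e := by
  by_cases ha : k ≤ f a
  · exact ⟨a, b, hab, ha, by simpa [ha] using h⟩
  · exact ⟨b, a, hab.trans Sym2.eq_swap, by simpa [ha] using h, by omega⟩

lemma edgeEnergy_indicator_nonneg (f : G.V → ℤ) (k : ℤ) (e : G.E) :
    0 ≤ G.edgeEnergy f (fun v => if k ≤ f v then 1 else 0) e := by
  obtain ⟨a, b, hab, -⟩ := G.exists_ends_eq e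
  rw [edgeEnergy_of_ends_eq hab]
  split_ifs <;> nlinarith

lemma Crosses.one_le_edgeEnergy {f : G.V → ℤ} {k : ℤ} {e : G.E} (h : G.Crosses f k e) :
    1 ≤ G.edgeEnergy f (fun v => if k ≤ f v then 1 else 0) e := by
  obtain ⟨a, b, hab, ha, hb⟩ := h
  rw [edgeEnergy_of_ends_eq hab, if_pos ha, if_neg (not_le.mpr hb)]
  omega

/-- Pair `D - E = Δf` with the indicator of `{f ≥ k}`: by Green's identity each crossing
edge contributes at least one, while the pairing is at most `deg D`. -/
theorem card_le_degree_of_crosses {D E : G.Divisor} {f : G.V → ℤ} (hD : G.Effective D)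
    (hE : G.Effective E) (hf : D - E = G.laplacian f) {k : ℤ} (C : Finset G.E)
    (hC : ∀ e ∈ C, G.Crosses f k e) : (C.card : ℤ) ≤ G.degree D := by
  set χ : G.V → ℤ := fun v => if k ≤ f v then 1 else 0
  calc (C.card : ℤ) = ∑ e ∈ C, 1 := by simp
    _ ≤ ∑ e ∈ C, G.edgeEnergy f χ e := Finset.sum_le_sum fun e he => (hC e he).one_le_edgeEnergy
    _ ≤ ∑ e, G.edgeEnergy f χ e := Finset.sum_le_sum_of_subset_of_nonneg (Finset.subset_univ C)
        fun e _ _ => G.edgeEnergy_indicator_nonneg f k e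
    _ = ∑ v, χ v * (D v - E v) := by rw [← sum_mul_laplacian, ← hf]; rfl
    _ ≤ ∑ v, D v := Finset.sum_le_sum fun v _ => by
        have := hD v; have := hE v
        simp only [χ]; split_ifs <;> omega

lemma three_le_degree_of_crosses {D E : G.Divisor} {f : G.V → ℤ} (hD : G.Effective D)
    (hE : G.Effective E) (hf : D - E = G.laplacian f) {k : ℤ} {e₁ e₂ e₃ : G.E} (h₁₂ : e₁ ≠ e₂)
    (h₁₃ : e₁ ≠ e₃) (h₂₃ : e₂ ≠ e₃) (he₁ : G.Crosses f k e₁) (he₂ : G.Crosses f k e₂)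
    (he₃ : G.Crosses f k e₃) : 3 ≤ G.degree D := by
  classical
  have h := card_le_degree_of_crosses hD hE hf (k := k) {e₁, e₂, e₃} (by simp [he₁, he₂, he₃])
  rwa [Finset.card_eq_three.mpr ⟨e₁, e₂, e₃, h₁₂, h₁₃, h₂₃, rfl⟩] at h

lemma Connected.induction (hG : G.Connected) {P : G.V → Prop} {v : G.V} (hv : P v)
    (step : ∀ e a b, G.ends e = s(a, b) → P a → P b) (w : G.V) : P w := by
  classical
  by_contra hw
  obtain ⟨e, -, a, b, hab, ha, hb⟩ := hG.2 (Finset.univ.filter P) ⟨v, by simpa⟩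
    fun h => hw (by simpa using Finset.eq_univ_iff_forall.mp h w)
  simp only [Finset.mem_filter, Finset.mem_univ, true_and] at ha hb
  exact hb (step e a b hab ha)

lemma Connected.exists_crosses (hG : G.Connected) {f : G.V → ℤ} {k : ℤ} {a b : G.V}
    (ha : k ≤ f a) (hb : f b < k) : ∃ e, G.Crosses f k e := by
  by_contra! h
  have := hG.induction (P := fun v => k ≤ f v) ha
    (fun e x y hxy hx => by by_contra hy; exact h e ⟨x, y, hxy, hx, by omega⟩) b
  omega

variable (G) in
def simpleGraphWithout (W : Set G.E) : SimpleGraph G.V where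
  Adj u v := ∃ e ∉ W, G.ends e = s(u, v)
  symm := ⟨fun _ _ ⟨e, he, h⟩ => ⟨e, he, h.trans Sym2.eq_swap⟩⟩
  loopless := ⟨fun _ ⟨e, _, h⟩ => G.loopless e (by rw [h]; rfl)⟩

lemma ConnectedWithout.connected_simpleGraphWithout {W : Set G.E} (h : G.ConnectedWithout W) :
    (G.simpleGraphWithout W).Connected := by
  classical
  obtain ⟨⟨v⟩, hcut⟩ := h
  have : Nonempty G.V := ⟨v⟩
  suffices hv : ∀ w, (G.simpleGraphWithout W).Reachable v w from
    SimpleGraph.Connected.mk fun x y => (hv x).symm.trans (hv y)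
  by_contra! ⟨w, hw⟩
  obtain ⟨e, he, a, b, hab, ha, hb⟩ := hcut
    (Finset.univ.filter ((G.simpleGraphWithout W).Reachable v)) ⟨v, by simp⟩
    fun h => hw (by simpa using Finset.eq_univ_iff_forall.mp h w)
  simp only [Finset.mem_filter, Finset.mem_univ, true_and] at ha hb
  exact hb (ha.trans (SimpleGraph.Adj.reachable ⟨e, he, hab⟩))

/-- A connected graph on `n` vertices has at least `n - 1` edges, so deleting an edge from a
tree disconnects it. -/
lemma IsTree.isBridge (hG : G.IsTree) (e : G.E) : G.IsBridge e := by
  classical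
  intro h
  have hV := h.connected_simpleGraphWithout.card_vert_le_card_edgeSet_add_one
  have hsub :
      (G.simpleGraphWithout {e}).edgeSet ⊆ ((Finset.univ.erase e).image G.ends : Set _) := by
    intro z hz
    induction z using Sym2.ind with
    | _ u v =>
      obtain ⟨e', he', h'⟩ := (SimpleGraph.mem_edgeSet _).mp hz
      simpa using ⟨e', he', h'⟩
  have hE : Nat.card (G.simpleGraphWithout {e}).edgeSet ≤ Fintype.card G.E - 1 := by
    rw [Nat.card_coe_set_eq]
    calc _ ≤ (((Finset.univ.erase e).image G.ends : Finset _) : Set (Sym2 G.V)).ncard :=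
          Set.ncard_le_ncard hsub (Finset.finite_toSet _)
      _ ≤ (Finset.univ.erase e).card := by rw [Set.ncard_coe_finset]; exact Finset.card_image_le
      _ = Fintype.card G.E - 1 := by
          rw [Finset.card_erase_of_mem (Finset.mem_univ e), Finset.card_univ]
  have hg := hG.2
  rw [genus] at hg
  rw [Nat.card_eq_fintype_card] at hV
  have : 0 < Fintype.card G.E := Fintype.card_pos_iff.mpr ⟨e⟩
  omega

lemma IsTree.exists_cut (hG : G.IsTree) (e : G.E) :
    ∃ (A : Finset G.V) (a b : G.V), G.ends e = s(a, b) ∧ a ∈ A ∧ b ∉ A ∧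
      ∀ e' u v, G.ends e' = s(u, v) → u ∈ A → v ∉ A → e' = e := by
  have hbr : ¬ G.ConnectedWithout {e} := hG.isBridge e
  simp only [ConnectedWithout, hG.1.1, true_and, not_forall, not_exists, not_and] at hbr
  obtain ⟨A, hA, hAuniv, hcut⟩ := hbr
  obtain ⟨e', -, a, b, hab, ha, hb⟩ := hG.1.2 A hA hAuniv
  have hcut' : ∀ e' u v, G.ends e' = s(u, v) → u ∈ A → v ∉ A → e' = e := fun e' u v h hu hv => by
    by_contra hne
    exact hcut e' hne u v h hu hv
  exact ⟨A, a, b, hcut' e' a b hab ha hb ▸ hab, ha, hb, hcut'⟩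

lemma numEdges_of_mem_of_notMem {A : Finset G.V} {e : G.E} {a b : G.V} (hab : G.ends e = s(a, b))
    (ha : a ∈ A) (hcut : ∀ e' u v, G.ends e' = s(u, v) → u ∈ A → v ∉ A → e' = e) {u v : G.V}
    (hu : u ∈ A) (hv : v ∉ A) : G.numEdges u v = if u = a ∧ v = b then 1 else 0 := by
  have hset : {e' | G.ends e' = s(u, v)} = if u = a ∧ v = b then {e} else ∅ := by
    ext e'
    constructor
    · intro (he' : G.ends e' = s(u, v))
      have he := hcut e' u v he' hu hv
      rw [he, hab, Sym2.eq_iff] at he'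
      rcases he' with ⟨rfl, rfl⟩ | ⟨rfl, rfl⟩
      · simp [he]
      · exact absurd ha hv
    · split_ifs with h
      · rintro rfl
        exact hab.trans (by rw [h.1, h.2])
      · simp
  rw [numEdges, hset]
  split_ifs <;> simp

lemma laplacian_indicator_of_cut {A : Finset G.V} {e : G.E} {a b : G.V} (hab : G.ends e = s(a, b))
    (ha : a ∈ A) (hb : b ∉ A) (hcut : ∀ e' u v, G.ends e' = s(u, v) → u ∈ A → v ∉ A → e' = e) :
    G.laplacian (fun v => if v ∈ A then 1 else 0) = Pi.single a 1 - Pi.single b 1 := by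
  have hterm : ∀ v w, (G.numEdges v w : ℤ) * ((if v ∈ A then 1 else 0) - if w ∈ A then 1 else 0)
      = (if v = a ∧ w = b then 1 else 0) - if v = b ∧ w = a then 1 else 0 := by
    intro v w
    by_cases hv : v ∈ A <;> by_cases hw : w ∈ A
    · simp [hv, hw, show v ≠ b from fun h => hb (h ▸ hv), show w ≠ b from fun h => hb (h ▸ hw)]
    · rw [numEdges_of_mem_of_notMem hab ha hcut hv hw]
      simp [hv, hw, show v ≠ b from fun h => hb (h ▸ hv)]
    · rw [numEdges_comm, numEdges_of_mem_of_notMem hab ha hcut hw hv]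
      simp [hv, hw, show v ≠ a from fun h => hv (h ▸ ha), and_comm]
    · simp [hv, hw, show v ≠ a from fun h => hv (h ▸ ha), show w ≠ a from fun h => hw (h ▸ ha)]
  ext v
  simp only [laplacian, hterm, Finset.sum_sub_distrib, ite_and, Pi.sub_apply, Pi.single_apply]
  split_ifs <;> simp

lemma IsTree.linEquiv_single (hG : G.IsTree) (v w : G.V) :
    G.LinEquiv (Pi.single v 1) (Pi.single w 1) := by
  refine hG.1.induction (P := fun w => G.LinEquiv (Pi.single v 1) (Pi.single w 1))
    (LinEquiv.refl _) (fun e x y hxy hx => hx.trans ?_) w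
  obtain ⟨A, a, b, hab, ha, hb, hcut⟩ := hG.exists_cut e
  have hequiv : G.LinEquiv (Pi.single a 1) (Pi.single b 1) :=
    ⟨_, (laplacian_indicator_of_cut hab ha hb hcut).symm⟩
  rw [hab, Sym2.eq_iff] at hxy
  rcases hxy with ⟨rfl, rfl⟩ | ⟨rfl, rfl⟩
  · exact hequiv
  · exact hequiv.symm

end Multigraph

open Multigraph

section Tripled

variable {T : Multigraph} {S : Finset T.V}

lemma Sym2.map_prodMk_eq_mk_iff {α β : Type*} (c : α) (z : Sym2 β) (i j : α) (x y : β) :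
    Sym2.map (fun v => (c, v)) z = s((i, x), (j, y)) ↔ c = i ∧ c = j ∧ z = s(x, y) := by
  induction z using Sym2.ind with
  | _ a b =>
    simp only [Sym2.map_mk, Sym2.eq_iff, Prod.ext_iff]
    tauto

lemma tripled_ends_inl_eq_iff {c i j : Fin 3} {e : T.E} {x y : T.V} :
    (tripled T S).ends (Sum.inl (c, e)) = s((i, x), (j, y)) ↔ c = i ∧ c = j ∧ T.ends e = s(x, y) :=
  Sym2.map_prodMk_eq_mk_iff ..

lemma tripled_ends_inr_eq_iff {c i j : Fin 3} {v : {v // v ∈ S}} {x y : T.V} :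
    (tripled T S).ends (Sum.inr (v, c)) = s((i, x), (j, y)) ↔
      (c = i ∧ c + 1 = j ∨ c = j ∧ c + 1 = i) ∧ v.1 = x ∧ v.1 = y := by
  show s((c, v.1), (c + 1, v.1)) = s((i, x), (j, y)) ↔ _
  simp only [Sym2.eq_iff, Prod.ext_iff]
  tauto

lemma Fin.three_add_one_ne (c : Fin 3) : c + 1 ≠ c := by
  fin_cases c <;> decide

lemma tripled_numEdges_self (i : Fin 3) (x y : T.V) :
    (tripled T S).numEdges (i, x) (i, y) = T.numEdges x y := by
  have hset : {e : (tripled T S).E | (tripled T S).ends e = s((i, x), (i, y))}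
      = (fun e => Sum.inl (i, e)) '' {e | T.ends e = s(x, y)} := by
    ext (⟨c, e⟩ | ⟨v, c⟩)
    · refine tripled_ends_inl_eq_iff.trans ⟨fun ⟨hc, _, he⟩ => ⟨e, he, by rw [hc]⟩, ?_⟩
      rintro ⟨e', he', h⟩
      simp only [Sum.inl.injEq, Prod.mk.injEq] at h
      obtain ⟨rfl, rfl⟩ := h
      exact ⟨rfl, rfl, he'⟩
    · refine tripled_ends_inr_eq_iff.trans
        ⟨fun ⟨h, _⟩ => ?_, fun ⟨_, _, h⟩ => (Sum.inl_ne_inr h).elim⟩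
      obtain ⟨rfl, h⟩ | ⟨rfl, h⟩ := h <;> exact absurd h (Fin.three_add_one_ne c)
  exact (congrArg Set.ncard hset).trans
    (Set.ncard_image_of_injective _ fun e e' h => (Prod.mk.inj (Sum.inl_injective h)).2)

lemma tripled_numEdges_eq_zero {i j : Fin 3} (hij : i ≠ j) {x y : T.V} (hxy : x ≠ y) :
    (tripled T S).numEdges (i, x) (j, y) = 0 := by
  unfold numEdges
  rw [Set.ncard_eq_zero]
  ext (⟨c, e⟩ | ⟨v, c⟩)
  · exact tripled_ends_inl_eq_iff.trans ⟨fun ⟨hi, hj, _⟩ => hij (hi ▸ hj), False.elim⟩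
  · exact tripled_ends_inr_eq_iff.trans ⟨fun ⟨_, hx, hy⟩ => hxy (hx ▸ hy), False.elim⟩

variable (S) in
def tripledPullback (D : T.Divisor) : (tripled T S).Divisor := fun p => D p.2

lemma tripled_laplacian_pullback (g : T.V → ℤ) (i : Fin 3) (x : T.V) :
    (tripled T S).laplacian (tripledPullback S g) (i, x) = T.laplacian g x := by
  show ∑ w : Fin 3 × T.V, ((tripled T S).numEdges (i, x) w : ℤ) * (g x - g w.2) = _
  rw [Fintype.sum_prod_type, Fintype.sum_eq_single i fun j hj =>
    Finset.sum_eq_zero fun y _ => ?_]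
  · simp only [tripled_numEdges_self]
    rfl
  · rcases eq_or_ne x y with rfl | hxy
    · simp
    · simp [tripled_numEdges_eq_zero (Ne.symm hj) hxy]

lemma tripled_linEquiv_pullback {D D' : T.Divisor} (h : T.LinEquiv D D') :
    (tripled T S).LinEquiv (tripledPullback S D) (tripledPullback S D') := by
  obtain ⟨g, hg⟩ := h
  exact ⟨tripledPullback S g, funext fun ⟨i, x⟩ => by
    rw [tripled_laplacian_pullback, ← hg]; rfl⟩

lemma tripled_sum_laplacian_sheet {f : (tripled T S).V → ℤ}
    (hf : ∀ u ∈ S, ∀ i j : Fin 3, f (i, u) = f (j, u)) (i : Fin 3) :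
    ∑ x, (tripled T S).laplacian f (i, x) = 0 := by
  have hsheet : ∑ x, (tripled T S).laplacian f (i, x)
      = ∑ p : Fin 3 × T.V, (if p.1 = i then 1 else 0) * (tripled T S).laplacian f p := by
    rw [Fintype.sum_prod_type]
    simp
  refine hsheet.trans ((sum_mul_laplacian f _).trans (Finset.sum_eq_zero fun e _ => ?_))
  rcases e with ⟨c, e⟩ | ⟨⟨v, hv⟩, c⟩
  · obtain ⟨a, b, hab, -⟩ := T.exists_ends_eq e
    refine (edgeEnergy_of_ends_eq (tripled_ends_inl_eq_iff.mpr ⟨rfl, rfl, hab⟩)).trans ?_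
    simp
  · refine (edgeEnergy_of_ends_eq (G := tripled T S) (e := Sum.inr (⟨v, hv⟩, c)) (a := (c, v))
      (b := (c + 1, v)) rfl).trans ?_
    simp [hf v hv c (c + 1)]

lemma tripled_sum_sheet_eq {D E : (tripled T S).Divisor} {f : (tripled T S).V → ℤ}
    (hf : D - E = (tripled T S).laplacian f) (hconst : ∀ u ∈ S, ∀ i j : Fin 3, f (i, u) = f (j, u))
    (i : Fin 3) : ∑ x, D (i, x) = ∑ x, E (i, x) := by
  have h : ∑ x, (D (i, x) - E (i, x)) = 0 := by
    rw [← tripled_sum_laplacian_sheet hconst i, ← hf]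
    rfl
  rw [Finset.sum_sub_distrib] at h
  omega

lemma tripled_degree (D : (tripled T S).Divisor) :
    (tripled T S).degree D = ∑ i, ∑ x, D (i, x) :=
  Fintype.sum_prod_type _

lemma exists_two_switches_of_ne : ∀ d : Fin 3 → Bool, (∃ a b, d a ≠ d b) →
    ∃ m₁ m₂ : Fin 3, m₁ ≠ m₂ ∧ d m₁ ≠ d (m₁ + 1) ∧ d m₂ ≠ d (m₂ + 1) := by
  decide

lemma tripled_crosses_inl {f : (tripled T S).V → ℤ} {k : ℤ} {c : Fin 3} {e : T.E}
    (h : T.Crosses (fun x => f (c, x)) k e) : (tripled T S).Crosses f k (Sum.inl (c, e)) := by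
  obtain ⟨a, b, hab, ha, hb⟩ := h
  exact ⟨(c, a), (c, b), tripled_ends_inl_eq_iff.mpr ⟨rfl, rfl, hab⟩, ha, hb⟩

lemma tripled_crosses_inr {f : (tripled T S).V → ℤ} {k : ℤ} (v : {v // v ∈ S}) (c : Fin 3)
    (h : ¬ (k ≤ f (c, v.1) ↔ k ≤ f (c + 1, v.1))) : (tripled T S).Crosses f k (Sum.inr (v, c)) :=
  crosses_of_ends_eq (a := (c, v.1)) (b := (c + 1, v.1)) rfl h

/-- If `f (i, u) ≠ f (j, u)`, then at the level `k` of the larger value two edges of the triangle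
over `u` cross, and so does a third: a tree edge in a sheet that the level splits or, if no sheet
is split, an edge of the triangle over another vertex of `S`. -/
lemma tripled_apply_eq_of_degree_le_two (hT : T.Connected) (hS : 2 ≤ S.card)
    {D E : (tripled T S).Divisor} {f : (tripled T S).V → ℤ} (hD : (tripled T S).Effective D)
    (hE : (tripled T S).Effective E) (hf : D - E = (tripled T S).laplacian f)
    (hdeg : (tripled T S).degree D ≤ 2) {u : T.V} (hu : u ∈ S) (i j : Fin 3) :
    f (i, u) = f (j, u) := by
  by_contra hij
  set k := max (f (i, u)) (f (j, u))
  obtain ⟨m₁, m₂, hm, h₁, h₂⟩ := exists_two_switches_of_ne (fun m => decide (k ≤ f (m, u)))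
    ⟨i, j, by simp only [ne_eq, decide_eq_decide]; omega⟩
  simp only [ne_eq, decide_eq_decide] at h₁ h₂
  have hu₁ := tripled_crosses_inr ⟨u, hu⟩ m₁ h₁
  have hu₂ := tripled_crosses_inr ⟨u, hu⟩ m₂ h₂
  have hne : (Sum.inr (⟨u, hu⟩, m₁) : (tripled T S).E) ≠ Sum.inr (⟨u, hu⟩, m₂) :=
    fun h => hm (congrArg Prod.snd (Sum.inr_injective h))
  suffices h3 : 3 ≤ (tripled T S).degree D by omega
  by_cases hsplit : ∃ m x y, k ≤ f (m, x) ∧ f (m, y) < k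
  · obtain ⟨m, x, y, hx, hy⟩ := hsplit
    obtain ⟨e, he⟩ := hT.exists_crosses (f := fun x => f (m, x)) hx hy
    exact three_le_degree_of_crosses hD hE hf hne Sum.inr_ne_inl Sum.inr_ne_inl hu₁ hu₂
      (tripled_crosses_inl he)
  · push Not at hsplit
    obtain ⟨t, ht, htu⟩ := Finset.exists_mem_ne hS u
    have hsheet (m : Fin 3) (x : T.V) : k ≤ f (m, x) ↔ k ≤ f (m, u) :=
      ⟨hsplit m x u, hsplit m u x⟩
    have hut (m m' : Fin 3) : (Sum.inr (⟨u, hu⟩, m) : (tripled T S).E) ≠ Sum.inr (⟨t, ht⟩, m') :=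
      fun h => htu (congrArg (fun p => p.1.1) (Sum.inr_injective h)).symm
    exact three_le_degree_of_crosses hD hE hf hne (hut _ _) (hut _ _) hu₁ hu₂
      (tripled_crosses_inr ⟨t, ht⟩ m₁ (by rwa [hsheet m₁ t, hsheet (m₁ + 1) t]))

lemma tripled_three_le_degree (hT : T.Connected) (hS : 2 ≤ S.card) {D : (tripled T S).Divisor}
    (hD : (tripled T S).Effective D) (hr : (tripled T S).RankGe D 1) :
    3 ≤ (tripled T S).degree D := by
  by_contra! hdeg
  obtain ⟨s, hs⟩ : S.Nonempty := Finset.card_pos.mp (by omega)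
  have hsheet (i : Fin 3) : 1 ≤ ∑ x, D (i, x) := by
    obtain ⟨E, hE, f, hf⟩ := hr (Pi.single (i, s) 1) (effective_single _ _ zero_le_one)
      (degree_single _ _ _)
    have hE' := (effective_single (tripled T S) (i, s) zero_le_one).add hE
    have hf' : D - ((Pi.single (i, s) 1 : (tripled T S).Divisor) + E) =
        (tripled T S).laplacian f := by
      rw [← hf, sub_sub]
    rw [tripled_sum_sheet_eq hf'
      (fun u hu => tripled_apply_eq_of_degree_le_two hT hS hD hE' hf' (by omega) hu) i]
    calc (1 : ℤ) ≤ ((Pi.single (i, s) 1 : (tripled T S).Divisor) + E) (i, s) := by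
          have hone : (Pi.single (i, s) 1 : (tripled T S).Divisor) (i, s) = 1 :=
            Pi.single_eq_same _ _
          have := hE (i, s)
          show (1 : ℤ) ≤ _ + _
          omega
      _ ≤ ∑ x, ((Pi.single (i, s) 1 : (tripled T S).Divisor) + E) (i, x) :=
          Finset.single_le_sum (fun x _ => hE' (i, x)) (Finset.mem_univ s)
  have : (3 : ℤ) ≤ ∑ i : Fin 3, ∑ x, D (i, x) := by
    simpa using Finset.sum_le_sum fun i (_ : i ∈ Finset.univ) => hsheet i
  rw [tripled_degree] at hdeg
  omega

lemma tripled_degree_pullback (D : T.Divisor) :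
    (tripled T S).degree (tripledPullback S D) = 3 * T.degree D := by
  rw [tripled_degree]
  simp [degree, tripledPullback]

lemma tripled_rankGe_one (hT : T.IsTree) (v : T.V) :
    (tripled T S).RankGe (tripledPullback S (Pi.single v 1)) 1 := by
  intro F hF hdeg
  obtain ⟨⟨i, w⟩, rfl⟩ := eq_single_of_effective_of_degree_eq_one hF hdeg
  obtain ⟨g, hg⟩ := tripled_linEquiv_pullback (S := S) (hT.linEquiv_single v w)
  refine ⟨tripledPullback S (Pi.single w 1) - (Pi.single (i, w) 1 : (tripled T S).Divisor),
    fun ⟨j, x⟩ => ?_, g, ?_⟩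
  · show (0 : ℤ) ≤ (Pi.single w 1 : T.V → ℤ) x - (Pi.single (i, w) 1 : Fin 3 × T.V → ℤ) (j, x)
    simp only [Pi.single_apply, Prod.mk.injEq]
    split_ifs <;> simp_all
  · rw [← hg]
    abel

end Tripled

theorem stmt_15_general (T : Multigraph) (hT : T.IsTree)
    (S : Finset T.V) (hS : 2 ≤ S.card) :
    (tripled T S).gonality = 3 := by
  obtain ⟨v, -⟩ : S.Nonempty := Finset.card_pos.mp (by omega)
  have : Nonempty (tripled T S).V := ⟨(0, v)⟩
  have h3 : 3 ∈ {n : ℕ | ∃ D, (tripled T S).Effective D ∧ (tripled T S).degree D = n ∧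
      1 ≤ (tripled T S).rank D} :=
    ⟨tripledPullback S (Pi.single v 1), fun p => T.effective_single v zero_le_one p.2,
      by rw [tripled_degree_pullback, degree_single]; rfl,
      (one_le_rank_iff _).mpr (tripled_rankGe_one hT v)⟩
  refine le_antisymm (Nat.sInf_le h3) (le_csInf ⟨3, h3⟩ ?_)
  rintro n ⟨D, hD, hdeg, hr⟩
  have := tripled_three_le_degree hT.1 hS hD ((one_le_rank_iff D).mp hr)
  omega

/-- Let `T` be a tree that is not a single vertex and let
`S ⊆ V(T)` have at least two vertices. Then `gon(𝒯(T)) = 3`. -/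
theorem stmt_15 (T : Multigraph) (hT : T.IsTree) (hcard : 2 ≤ Fintype.card T.V)
    (S : Finset T.V) (hS : 2 ≤ S.card) :
    (tripled T S).gonality = 3 :=
  stmt_15_general T hT S hS
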